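/- arXiv:2106.02261 — 3 statements merged into one kernel-verified Lean document; each statement's English description precedes it below -/
import Mathlib

section
/- Let M be a positive integer, let p, p̃ ∈ ℝ^M have strictly positive entries, and let Φ, Φ̃ ∈ ℝ^{M×M} satisfy Φᵀ diag(p) Φ = I and Φ̃ᵀ diag(p̃) Φ̃ = I. Suppose Λ and Λ̃ are diagonal M × M matrices with strictly positive diagonal entries such that Φ Λ Φᵀ = Φ̃ Λ̃ Φ̃ᵀ. Define Ã = Φ̃ᵀ diag(p̃) Φ, the overlap matrix 𝒪 = Φᵀ diag(p̃) Φ, and U = Λ^{1/2} Ãᵀ Λ̃^{-1/2}. Then U is orthogonal (Uᵀ U = I) and Λ^{1/2} 𝒪 Λ^{1/2} = U Λ̃ Uᵀ. -/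
open Matrix

/-!
Since `Φ̃ᵀ diag(p̃) Φ̃ = I` with `Φ̃` square, `Φ̃ᵀ diag(p̃)` is a two-sided inverse of `Φ̃`.
Conjugating the kernel identity `Φ Λ Φᵀ = Φ̃ Λ̃ Φ̃ᵀ` by it gives `Ã Λ Ãᵀ = Λ̃`, which is
`Uᵀ U = I` after rescaling; and `Φ̃ Φ̃ᵀ diag(p̃) = I` collapses `Ãᵀ Ã` to the overlap `𝒪`,
which is the second identity after the same rescaling.
-/

section CrossOverlap

variable {R m n k : Type*} [Fintype m]

def crossOverlap [CommSemiring R] (D : Matrix m m R) (Ψ : Matrix m k R) (Φ : Matrix m n R) :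
    Matrix k n R :=
  Ψᵀ * D * Φ

theorem crossOverlap_mul_mul_transpose [CommSemiring R] [Fintype n] [Fintype k] [DecidableEq k]
    {D : Matrix m m R} (hD : Dᵀ = D) {Ψ : Matrix m k R} {Φ : Matrix m n R} {Λ : Matrix n n R}
    {Λ' : Matrix k k R} (hΨ : Ψᵀ * D * Ψ = 1) (hK : Φ * Λ * Φᵀ = Ψ * Λ' * Ψᵀ) :
    crossOverlap D Ψ Φ * Λ * (crossOverlap D Ψ Φ)ᵀ = Λ' :=
  calc crossOverlap D Ψ Φ * Λ * (crossOverlap D Ψ Φ)ᵀ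
      = Ψᵀ * D * (Φ * Λ * Φᵀ) * (D * Ψ) := by
        simp only [crossOverlap, transpose_mul, transpose_transpose, hD, Matrix.mul_assoc]
    _ = (Ψᵀ * D * Ψ) * Λ' * (Ψᵀ * D * Ψ) := by
        rw [hK]; simp only [Matrix.mul_assoc]
    _ = Λ' := by rw [hΨ, Matrix.one_mul, Matrix.mul_one]

theorem transpose_crossOverlap_mul_crossOverlap [CommRing R] [DecidableEq m] {D : Matrix m m R}
    (hD : Dᵀ = D) {Ψ : Matrix m m R} (hΨ : Ψᵀ * D * Ψ = 1) (Φ : Matrix m n R) :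
    (crossOverlap D Ψ Φ)ᵀ * crossOverlap D Ψ Φ = Φᵀ * D * Φ := by
  have hΨ_right : Ψ * (Ψᵀ * D) = 1 := mul_eq_one_comm.mp hΨ
  calc (crossOverlap D Ψ Φ)ᵀ * crossOverlap D Ψ Φ
      = Φᵀ * D * (Ψ * (Ψᵀ * D)) * Φ := by
        simp only [crossOverlap, transpose_mul, transpose_transpose, hD, Matrix.mul_assoc]
    _ = Φᵀ * D * Φ := by rw [hΨ_right, Matrix.mul_one]

end CrossOverlap

section DiagonalSqrt

variable {n : Type*} [Fintype n] [DecidableEq n] {l : n → ℝ}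

theorem diagonal_sqrt_mul_diagonal_sqrt (hl : ∀ i, 0 ≤ l i) :
    diagonal (fun i => √(l i)) * diagonal (fun i => √(l i)) = diagonal l := by
  rw [diagonal_mul_diagonal]
  exact congrArg diagonal (funext fun i => Real.mul_self_sqrt (hl i))

theorem diagonal_inv_sqrt_mul_diagonal_mul_diagonal_inv_sqrt (hl : ∀ i, 0 < l i) :
    diagonal (fun i => (√(l i))⁻¹) * diagonal l * diagonal (fun i => (√(l i))⁻¹) = 1 := by
  rw [diagonal_mul_diagonal, diagonal_mul_diagonal, ← diagonal_one]
  refine congrArg diagonal (funext fun i => ?_)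
  have hsqrt : √(l i) ≠ 0 := (Real.sqrt_pos.mpr (hl i)).ne'
  field_simp
  exact (Real.sq_sqrt (hl i).le).symm

end DiagonalSqrt

theorem stmt_6_general {M : ℕ}
    (pt : Fin M → ℝ)
    (Φ Φt : Matrix (Fin M) (Fin M) ℝ)
    (hΦt : Φtᵀ * diagonal pt * Φt = 1)
    (l lt : Fin M → ℝ) (hl : ∀ i, 0 < l i) (hlt : ∀ i, 0 < lt i)
    (hK : Φ * diagonal l * Φᵀ = Φt * diagonal lt * Φtᵀ) :
    let At : Matrix (Fin M) (Fin M) ℝ := Φtᵀ * diagonal pt * Φ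
    let O : Matrix (Fin M) (Fin M) ℝ := Φᵀ * diagonal pt * Φ
    let Lhalf : Matrix (Fin M) (Fin M) ℝ := diagonal fun i => Real.sqrt (l i)
    let LtInvHalf : Matrix (Fin M) (Fin M) ℝ := diagonal fun i => (Real.sqrt (lt i))⁻¹
    let U : Matrix (Fin M) (Fin M) ℝ := Lhalf * Atᵀ * LtInvHalf
    Uᵀ * U = 1 ∧ Lhalf * O * Lhalf = U * diagonal lt * Uᵀ := by
  intro At O Lhalf LtInvHalf U
  have hAΛA : At * diagonal l * Atᵀ = diagonal lt :=
    crossOverlap_mul_mul_transpose (diagonal_transpose pt) hΦt hK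
  have hAA : Atᵀ * At = O :=
    transpose_crossOverlap_mul_crossOverlap (diagonal_transpose pt) hΦt Φ
  have hL : Lhalf * Lhalf = diagonal l := diagonal_sqrt_mul_diagonal_sqrt fun i => (hl i).le
  have hLt : LtInvHalf * diagonal lt * LtInvHalf = 1 :=
    diagonal_inv_sqrt_mul_diagonal_mul_diagonal_inv_sqrt hlt
  have hUT : Uᵀ = LtInvHalf * At * Lhalf := by
    simp only [U, Lhalf, LtInvHalf, transpose_mul, diagonal_transpose, transpose_transpose,
      Matrix.mul_assoc]
  constructor
  · calc Uᵀ * U = LtInvHalf * (At * (Lhalf * Lhalf) * Atᵀ) * LtInvHalf := by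
          rw [hUT]; simp only [U, Matrix.mul_assoc]
      _ = 1 := by rw [hL, hAΛA, hLt]
  · calc Lhalf * O * Lhalf
        = Lhalf * Atᵀ * (LtInvHalf * diagonal lt * LtInvHalf) * At * Lhalf := by
          rw [hLt, ← hAA]; simp only [Matrix.mul_one, Matrix.mul_assoc]
      _ = U * diagonal lt * Uᵀ := by rw [hUT]; simp only [U, Matrix.mul_assoc]

/-- With the two-measure orthonormality relations, diagonal positive
eigenvalue matrices `Λ = diag l`, `Λ̃ = diag l̃` satisfying `Φ Λ Φᵀ = Φ̃ Λ̃ Φ̃ᵀ`,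
cross-overlap `Ã = Φ̃ᵀ diag(p̃) Φ`, overlap `𝒪 = Φᵀ diag(p̃) Φ`, and
`U = Λ^{1/2} Ãᵀ Λ̃^{-1/2}`, the matrix `U` is orthogonal and
`Λ^{1/2} 𝒪 Λ^{1/2} = U Λ̃ Uᵀ`. -/
theorem stmt_6 {M : ℕ} (hM : 0 < M)
    (p pt : Fin M → ℝ) (hp : ∀ i, 0 < p i) (hpt : ∀ i, 0 < pt i)
    (Φ Φt : Matrix (Fin M) (Fin M) ℝ)
    (hΦ : Φᵀ * diagonal p * Φ = 1) (hΦt : Φtᵀ * diagonal pt * Φt = 1)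
    (l lt : Fin M → ℝ) (hl : ∀ i, 0 < l i) (hlt : ∀ i, 0 < lt i)
    (hK : Φ * diagonal l * Φᵀ = Φt * diagonal lt * Φtᵀ) :
    let At : Matrix (Fin M) (Fin M) ℝ := Φtᵀ * diagonal pt * Φ
    let O : Matrix (Fin M) (Fin M) ℝ := Φᵀ * diagonal pt * Φ
    let Lhalf : Matrix (Fin M) (Fin M) ℝ := diagonal fun i => Real.sqrt (l i)
    let LtInvHalf : Matrix (Fin M) (Fin M) ℝ := diagonal fun i => (Real.sqrt (lt i))⁻¹
    let U : Matrix (Fin M) (Fin M) ℝ := Lhalf * Atᵀ * LtInvHalf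
    Uᵀ * U = 1 ∧ Lhalf * O * Lhalf = U * diagonal lt * Uᵀ :=
  stmt_6_general pt Φ Φt hΦt l lt hl hlt hK
end

section
/- Fix real numbers α > 0 and r > 0. For λ̃ > 0 let κ'(λ̃) denote the unique positive solution of κ = λ̃ + κ/(α + κ), and define E(λ̃) = (r·α + κ'(λ̃)²) / ((κ'(λ̃) + α)² − α). Then for every λ̃ > 0 the denominator (κ'(λ̃) + α)² − α is strictly positive, and E attains its global minimum over λ̃ ∈ (0, ∞) at λ̃ = r; that is, E(λ̃) ≥ E(r) for all λ̃ > 0. -/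
lemma stmt14_aux (α : ℝ) (hα : 0 < α) (lt : ℝ) (hlt : 0 < lt) (A : ℝ) (hA : 0 < A)
    (hEq : A * (α + A) = lt * (α + A) + A) : 0 < (A + α) ^ 2 - α := by
  have h1 : 1 < α + A := by nlinarith
  nlinarith

/-- Fix `α > 0`, `r > 0`. For `λ̃ > 0` let `κ'(λ̃)` be the unique positive
solution of `κ = λ̃ + κ/(α+κ)` and `E(λ̃) = (rα + κ'(λ̃)²)/((κ'(λ̃)+α)² − α)`.
Then the denominator is positive for all `λ̃ > 0` and `E` attains its global minimum
over `(0,∞)` at `λ̃ = r`: `E(λ̃) ≥ E(r)` for all `λ̃ > 0`. -/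
theorem stmt_14 (α r : ℝ) (hα : 0 < α) (hr : 0 < r)
    (k : ℝ → ℝ)
    (hk : ∀ lt : ℝ, 0 < lt → 0 < k lt ∧ k lt = lt + k lt / (α + k lt)) :
    let E : ℝ → ℝ := fun lt => (r * α + k lt ^ 2) / ((k lt + α) ^ 2 - α)
    (∀ lt : ℝ, 0 < lt → 0 < (k lt + α) ^ 2 - α) ∧
    (∀ lt : ℝ, 0 < lt → E r ≤ E lt) := by
  intro E
  have hEq : ∀ lt : ℝ, 0 < lt → k lt * (α + k lt) = lt * (α + k lt) + k lt := by
    intro lt hlt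
    obtain ⟨hkpos, heq⟩ := hk lt hlt
    have hne : α + k lt ≠ 0 := by positivity
    field_simp at heq
    linarith [heq]
  have hD : ∀ lt : ℝ, 0 < lt → 0 < (k lt + α) ^ 2 - α := fun lt hlt =>
    stmt14_aux α hα lt hlt (k lt) (hk lt hlt).1 (hEq lt hlt)
  refine ⟨hD, ?_⟩
  intro lt hlt
  set A := k lt with hAdef
  set B := k r with hBdef
  have hApos : 0 < A := (hk lt hlt).1
  have hBpos : 0 < B := (hk r hr).1
  have hDA : 0 < (A + α) ^ 2 - α := hD lt hlt
  have hDB : 0 < (B + α) ^ 2 - α := hD r hr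
  have eqB : B * (α + B) = r * (α + B) + B := hEq r hr
  have hBα : 0 < B + α := by linarith
  show (r * α + B ^ 2) / ((B + α) ^ 2 - α) ≤ (r * α + A ^ 2) / ((A + α) ^ 2 - α)
  rw [div_le_div_iff₀ hDB hDA]
  have key : ((r * α + A ^ 2) * ((B + α) ^ 2 - α) - (r * α + B ^ 2) * ((A + α) ^ 2 - α))
      * (B + α) = α * (A - B) ^ 2 * ((B + α) ^ 2 - α) := by
    linear_combination (α * (A - B) * (A + B + 2 * α)) * eqB
  nlinarith [sq_nonneg (A - B), mul_pos hα hDB]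
end

section
/- Let D, M_r, N, P be positive integers with M_r ≤ D and N ≤ D, and let σ > 0, σ̃ ≥ 0, ε ≥ 0, λ > 0 be real numbers. Let C be the diagonal D × D matrix with first M_r diagonal entries equal to σ² and the rest 0, let C̃ = σ̃² I_D, and let β ∈ ℝ^D with β_ρ = 0 for ρ > N. Set α = P/M_r, λ̃ = λD/(σ² M_r), let κ' be the unique positive root of κ'² + (α − 1 − λ̃)κ' − λ̃α = 0, and set κ = σ² M_r κ' / D. Then: (i) κ satisfies the self-consistent equation κ = λ + κ Tr[C (P C + κ D I)⁻¹]; and (ii) with γ = P Tr[C² (PC + κD I)⁻²] and γ' = P Tr[C̃ C (PC + κD I)⁻²], one has γ < 1 and γ/(1−γ) ε² + (κD)²/(1−γ) βᵀ C (PC + κD I)⁻² β + (γ' − γ)/(1−γ) ε² + (κD)² βᵀ (PC + κD I)⁻¹ ( C̃ − ((1−γ')/(1−γ)) C ) (PC + κD I)⁻¹ β = σ̃² [ (ε²/σ²)·α/((κ' + α)² − α) + (κ'²/((κ' + α)² − α)) Σ_{ρ=1}^{M_r} β_ρ² + Σ_{ρ=M_r+1}^{N} β_ρ² ]. -/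
/-!
Every matrix in the statement is diagonal with one value on the first `M_r` coordinates and
another on the rest, so all traces and quadratic forms reduce to scalars. Since
`κD = σ² M_r κ'`, the matrix `PC + κD I` has entries `σ² M_r (κ' + α)` and `σ² M_r κ'`; this gives
`γ = α / (κ' + α)²`, `γ' = (σ̃² / σ²) γ`, and turns the self-consistent equation into
`κ' (κ' + α - 1) = λ̃ (κ' + α)`, which is the quadratic defining `κ'`. As `λ̃ > 0`, this forces
`κ' + α > 1`, hence `α < (κ' + α)²`, i.e. `γ < 1`; the error formula is then rational algebra.
-/

open Matrix

section TwoLevel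

variable {R : Type*} {D : ℕ} (Mr : ℕ)

def twoLevel (a b : R) (i : Fin D) : R := if (i : ℕ) < Mr then a else b

namespace Matrix

section Semiring
variable [Semiring R]

theorem one_eq_diagonal_twoLevel : (1 : Matrix (Fin D) (Fin D) R) = diagonal (twoLevel Mr 1 1) := by
  rw [← diagonal_one]; congr 1; funext i; simp [twoLevel]

theorem smul_diagonal_twoLevel (c a b : R) :
    c • diagonal (twoLevel (D := D) Mr a b) = diagonal (twoLevel Mr (c * a) (c * b)) := by
  rw [← diagonal_smul]; congr 1; funext i; simp only [twoLevel, Pi.smul_apply, smul_eq_mul]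
  split_ifs <;> rfl

theorem diagonal_twoLevel_add (a b a' b' : R) :
    diagonal (twoLevel (D := D) Mr a b) + diagonal (twoLevel Mr a' b')
      = diagonal (twoLevel Mr (a + a') (b + b')) := by
  rw [diagonal_add]; congr 1; funext i; simp only [twoLevel]; split_ifs <;> rfl

theorem diagonal_twoLevel_mul (a b a' b' : R) :
    diagonal (twoLevel (D := D) Mr a b) * diagonal (twoLevel Mr a' b')
      = diagonal (twoLevel Mr (a * a') (b * b')) := by
  rw [diagonal_mul_diagonal]; congr 1; funext i; simp only [twoLevel]; split_ifs <;> rfl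

theorem trace_diagonal_twoLevel {Mr : ℕ} (h : Mr ≤ D) (a b : R) :
    trace (diagonal (twoLevel (D := D) Mr a b)) = Mr • a + (D - Mr) • b := by
  have hlow : (Finset.univ.filter fun i : Fin D => (i : ℕ) < Mr).card = Mr := by
    rw [Fin.card_filter_val_lt, min_eq_right h]
  have hhigh : (Finset.univ.filter fun i : Fin D => ¬ (i : ℕ) < Mr).card = D - Mr := by
    have := Finset.card_filter_add_card_filter_not (s := Finset.univ)
      fun i : Fin D => (i : ℕ) < Mr
    rw [Finset.card_univ, Fintype.card_fin] at this
    omega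
  simp only [trace_diagonal, twoLevel, Finset.sum_ite, Finset.sum_const, hlow, hhigh]

end Semiring

theorem diagonal_twoLevel_sub [Ring R] (a b a' b' : R) :
    diagonal (twoLevel (D := D) Mr a b) - diagonal (twoLevel Mr a' b')
      = diagonal (twoLevel Mr (a - a') (b - b')) := by
  rw [diagonal_sub]; congr 1; funext i; simp only [twoLevel]; split_ifs <;> rfl

theorem inv_diagonal_twoLevel [Field R] {a b : R} (ha : a ≠ 0) (hb : b ≠ 0) :
    (diagonal (twoLevel (D := D) Mr a b))⁻¹ = diagonal (twoLevel Mr a⁻¹ b⁻¹) := by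
  refine inv_eq_right_inv ?_
  rw [diagonal_twoLevel_mul, mul_inv_cancel₀ ha, mul_inv_cancel₀ hb,
    ← one_eq_diagonal_twoLevel]

theorem inv_smul_diagonal_twoLevel_add_smul_one [Field R] {c a k : R} (h : c * a + k ≠ 0)
    (hk : k ≠ 0) :
    (c • diagonal (twoLevel (D := D) Mr a 0) + k • 1)⁻¹
      = diagonal (twoLevel Mr (c * a + k)⁻¹ k⁻¹) := by
  rw [one_eq_diagonal_twoLevel Mr, smul_diagonal_twoLevel, smul_diagonal_twoLevel,
    diagonal_twoLevel_add, mul_zero, zero_add, mul_one, inv_diagonal_twoLevel Mr h hk]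

theorem dotProduct_diagonal_twoLevel_mulVec [CommRing R] {N : ℕ} {β : Fin D → R}
    (hβ : ∀ i : Fin D, N ≤ (i : ℕ) → β i = 0) (a b : R) :
    β ⬝ᵥ (diagonal (twoLevel Mr a b) *ᵥ β)
      = a * ∑ i ∈ Finset.univ.filter (fun i : Fin D => (i : ℕ) < Mr), β i ^ 2
        + b * ∑ i ∈ Finset.univ.filter (fun i : Fin D => Mr ≤ (i : ℕ) ∧ (i : ℕ) < N),
          β i ^ 2 := by
  have split (i : Fin D) : β i * (twoLevel Mr a b i * β i)
      = a * (if (i : ℕ) < Mr then β i ^ 2 else 0)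
        + b * if Mr ≤ (i : ℕ) ∧ (i : ℕ) < N then β i ^ 2 else 0 := by
    simp only [twoLevel]
    split_ifs
    · omega
    · ring
    · ring
    · rw [hβ i (by omega)]; ring
  simp only [dotProduct, mulVec_diagonal, split, Finset.sum_add_distrib, Finset.mul_sum,
    Finset.sum_filter]

end Matrix

end TwoLevel

theorem one_lt_add_of_sq_add_mul_sub_eq_zero {x α l : ℝ} (hx : 0 < x) (hα : 0 ≤ α)
    (hl : 0 < l) (h : x ^ 2 + (α - 1 - l) * x - l * α = 0) : 1 < x + α := by
  nlinarith [mul_pos hl (add_pos_of_pos_of_nonneg hx hα)]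

theorem lt_sq_add_of_one_lt_add {x α : ℝ} (hx : 0 < x) (h : 1 < x + α) : α < (x + α) ^ 2 := by
  nlinarith

theorem stmt_19_general (D Mr N P : ℕ) (hMr : 0 < Mr)
    (hMrD : Mr ≤ D)
    (σ σt ε lam : ℝ) (hσ : 0 < σ) (hlam : 0 < lam)
    (β : Fin D → ℝ) (hβ : ∀ i : Fin D, N ≤ (i : ℕ) → β i = 0)
    (κ' : ℝ)
    (hκ'pos : 0 < κ')
    (hκ'root : κ' ^ 2 + ((P : ℝ) / Mr - 1 - lam * D / (σ ^ 2 * Mr)) * κ'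
        - (lam * D / (σ ^ 2 * Mr)) * ((P : ℝ) / Mr) = 0) :
    let α : ℝ := (P : ℝ) / Mr
    let κ : ℝ := σ ^ 2 * Mr * κ' / D
    let C : Matrix (Fin D) (Fin D) ℝ :=
      diagonal fun i => if (i : ℕ) < Mr then σ ^ 2 else 0
    let Ct : Matrix (Fin D) (Fin D) ℝ := σt ^ 2 • 1
    let Minv : Matrix (Fin D) (Fin D) ℝ :=
      ((P : ℝ) • C + (κ * D) • (1 : Matrix (Fin D) (Fin D) ℝ))⁻¹
    let γ : ℝ := (P : ℝ) * (C * C * Minv * Minv).trace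
    let γ' : ℝ := (P : ℝ) * (Ct * C * Minv * Minv).trace
    (κ = lam + κ * (C * Minv).trace) ∧
    γ < 1 ∧
    (γ / (1 - γ) * ε ^ 2
        + (κ * D) ^ 2 / (1 - γ) * (β ⬝ᵥ ((C * Minv * Minv) *ᵥ β))
        + (γ' - γ) / (1 - γ) * ε ^ 2
        + (κ * D) ^ 2 *
            (β ⬝ᵥ ((Minv * (Ct - ((1 - γ') / (1 - γ)) • C) * Minv) *ᵥ β))
      = σt ^ 2 * ((ε ^ 2 / σ ^ 2) * α / ((κ' + α) ^ 2 - α)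
          + (κ' ^ 2 / ((κ' + α) ^ 2 - α)) *
              (∑ ρ ∈ Finset.univ.filter fun ρ : Fin D => (ρ : ℕ) < Mr, β ρ ^ 2)
          + ∑ ρ ∈ Finset.univ.filter
              (fun ρ : Fin D => Mr ≤ (ρ : ℕ) ∧ (ρ : ℕ) < N), β ρ ^ 2)) := by
  intro α κ C Ct Minv γ γ'
  have hMr₀ : (0 : ℝ) < Mr := by exact_mod_cast hMr
  have hD₀ : (0 : ℝ) < D := by exact_mod_cast hMr.trans_le hMrD
  have hgt : 1 < κ' + α :=
    one_lt_add_of_sq_add_mul_sub_eq_zero hκ'pos (by positivity) (by positivity) hκ'root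
  have hsq : α < (κ' + α) ^ 2 := lt_sq_add_of_one_lt_add hκ'pos hgt
  have hκD : κ * D = σ ^ 2 * Mr * κ' := by simp only [κ]; field_simp
  have hPκD : P * σ ^ 2 + κ * D = σ ^ 2 * Mr * (κ' + α) := by
    simp only [κ, α]; field_simp; ring
  have hC : C = diagonal (twoLevel Mr (σ ^ 2) 0) := rfl
  have hCt : Ct = diagonal (twoLevel Mr (σt ^ 2) (σt ^ 2)) := by
    rw [← mul_one (σt ^ 2), ← smul_diagonal_twoLevel, ← one_eq_diagonal_twoLevel]
  have hMinv :
      Minv = diagonal (twoLevel Mr (σ ^ 2 * Mr * (κ' + α))⁻¹ (σ ^ 2 * Mr * κ')⁻¹) := by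
    rw [← hPκD, ← hκD]
    exact inv_smul_diagonal_twoLevel_add_smul_one Mr (by rw [hPκD]; positivity)
      (by rw [hκD]; positivity)
  have hP : (P : ℝ) = α * Mr := by simp only [α]; field_simp
  have hγ : γ = α / (κ' + α) ^ 2 := by
    simp only [γ, hC, hMinv, diagonal_twoLevel_mul, trace_diagonal_twoLevel hMrD, nsmul_eq_mul,
      zero_mul, mul_zero, add_zero, hP]
    field_simp
  have hγ' : γ' = σt ^ 2 / σ ^ 2 * γ := by
    simp only [γ', γ, hCt, hC, hMinv, diagonal_twoLevel_mul, trace_diagonal_twoLevel hMrD,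
      nsmul_eq_mul, zero_mul, mul_zero, add_zero]
    field_simp
  refine ⟨?_, by rw [hγ, div_lt_one (by positivity)]; exact hsq, ?_⟩
  · simp only [hC, hMinv, diagonal_twoLevel_mul, trace_diagonal_twoLevel hMrD, nsmul_eq_mul,
      zero_mul, mul_zero, add_zero, κ, α]
    field_simp at hκ'root ⊢
    linear_combination hκ'root
  · have hden : (κ' + α) ^ 2 - α ≠ 0 := (sub_pos.mpr hsq).ne'
    simp only [hC, hCt, hMinv, smul_diagonal_twoLevel, diagonal_twoLevel_sub, diagonal_twoLevel_mul,
      dotProduct_diagonal_twoLevel_mulVec Mr hβ, mul_zero, zero_mul, sub_zero, add_zero, hκD, hγ',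
      hγ]
    field_simp
    ring

/-- Closed-form OOD generalization error for linear regression with
training covariance `C = diag(σ²,…,σ²,0,…,0)` (rank `M_r`), test covariance
`C̃ = σ̃² I`, target `β` supported on the first `N` coordinates. With `α = P/M_r`,
`λ̃ = λD/(σ²M_r)`, `κ'` the unique positive root of `κ'² + (α−1−λ̃)κ' − λ̃α = 0`
and `κ = σ²M_r κ'/D`: (i) `κ = λ + κ Tr[C (PC + κD I)⁻¹]`; and (ii) with
`γ = P Tr[C²(PC+κDI)⁻²]`, `γ' = P Tr[C̃C(PC+κDI)⁻²]`, one has `γ < 1` and the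
theoretical error expression equals
`σ̃²[(ε²/σ²)·α/((κ'+α)²−α) + κ'²/((κ'+α)²−α)·Σ_{ρ≤M_r}β_ρ² + Σ_{M_r<ρ≤N}β_ρ²]`. -/
theorem stmt_19 (D Mr N P : ℕ) (hD : 0 < D) (hMr : 0 < Mr) (hN : 0 < N) (hP : 0 < P)
    (hMrD : Mr ≤ D) (hND : N ≤ D)
    (σ σt ε lam : ℝ) (hσ : 0 < σ) (hσt : 0 ≤ σt) (hε : 0 ≤ ε) (hlam : 0 < lam)
    (β : Fin D → ℝ) (hβ : ∀ i : Fin D, N ≤ (i : ℕ) → β i = 0)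
    (κ' : ℝ)
    (hκ'pos : 0 < κ')
    (hκ'root : κ' ^ 2 + ((P : ℝ) / Mr - 1 - lam * D / (σ ^ 2 * Mr)) * κ'
        - (lam * D / (σ ^ 2 * Mr)) * ((P : ℝ) / Mr) = 0) :
    let α : ℝ := (P : ℝ) / Mr
    let κ : ℝ := σ ^ 2 * Mr * κ' / D
    let C : Matrix (Fin D) (Fin D) ℝ :=
      diagonal fun i => if (i : ℕ) < Mr then σ ^ 2 else 0
    let Ct : Matrix (Fin D) (Fin D) ℝ := σt ^ 2 • 1
    let Minv : Matrix (Fin D) (Fin D) ℝ :=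
      ((P : ℝ) • C + (κ * D) • (1 : Matrix (Fin D) (Fin D) ℝ))⁻¹
    let γ : ℝ := (P : ℝ) * (C * C * Minv * Minv).trace
    let γ' : ℝ := (P : ℝ) * (Ct * C * Minv * Minv).trace
    (κ = lam + κ * (C * Minv).trace) ∧
    γ < 1 ∧
    (γ / (1 - γ) * ε ^ 2
        + (κ * D) ^ 2 / (1 - γ) * (β ⬝ᵥ ((C * Minv * Minv) *ᵥ β))
        + (γ' - γ) / (1 - γ) * ε ^ 2
        + (κ * D) ^ 2 *
            (β ⬝ᵥ ((Minv * (Ct - ((1 - γ') / (1 - γ)) • C) * Minv) *ᵥ β))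
      = σt ^ 2 * ((ε ^ 2 / σ ^ 2) * α / ((κ' + α) ^ 2 - α)
          + (κ' ^ 2 / ((κ' + α) ^ 2 - α)) *
              (∑ ρ ∈ Finset.univ.filter fun ρ : Fin D => (ρ : ℕ) < Mr, β ρ ^ 2)
          + ∑ ρ ∈ Finset.univ.filter
              (fun ρ : Fin D => Mr ≤ (ρ : ℕ) ∧ (ρ : ℕ) < N), β ρ ^ 2)) :=
  stmt_19_general D Mr N P hMr hMrD σ σt ε lam hσ hlam β hβ κ' hκ'pos hκ'root
end
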